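/- For every integer N ≥ 3, the intersection span{ξ_p : p ∈ NC(N+1)} ∩ span{ξ_p : p ∈ CR(N+1)}, taken inside ((Fin (N+1) → Fin N) → ℂ), is a one-dimensional subspace. In particular, there exists a nonzero linear combination of crossing-partition vectors ξ_p (p ∈ CR(N+1)) that lies in the span of the noncrossing-partition vectors, and it is unique up to scaling. -/

import Mathlib

open scoped Classical

/-- The block relation of a finite partition of `Fin n` (partition of `[n]`):
`x ∼_p y` iff `x` and `y` lie in the same block of `p`. -/
def PartRel {n : ℕ} (p : Finpartition (Finset.univ : Finset (Fin n))) (x y : Fin n) : Prop :=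
  ∃ B ∈ p.parts, x ∈ B ∧ y ∈ B

/-- `κ` is a crossing of the relation `r`: `κ = {a,b,c,d}` with `a < b < c < d`,
`r a c`, `r b d`, and `¬ r a b`. -/
def IsCross {n : ℕ} (r : Fin n → Fin n → Prop) (κ : Finset (Fin n)) : Prop :=
  ∃ a b c d : Fin n, a < b ∧ b < c ∧ c < d ∧ κ = {a, b, c, d} ∧ r a c ∧ r b d ∧ ¬ r a b

/-- `cr p`: the set of crossings of the partition `p`. -/
def cr {n : ℕ} (p : Finpartition (Finset.univ : Finset (Fin n))) : Set (Finset (Fin n)) :=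
  {κ | IsCross (PartRel p) κ}


/-- `crossers p` (`χ(p)`): the union of all crossings of `p`. -/
def crossers {n : ℕ} (p : Finpartition (Finset.univ : Finset (Fin n))) : Set (Fin n) :=
  {x | ∃ κ ∈ cr p, x ∈ κ}

/-- The vector `ξ_p ∈ (ℂ^N)^{⊗k}`, identified with `(Fin k → Fin N) → ℂ`:
its coordinate at `i` is `1` if `i` is constant on every block of `p`, else `0`. -/
noncomputable def xi (N : ℕ) {k : ℕ} (p : Finpartition (Finset.univ : Finset (Fin k))) :
    (Fin k → Fin N) → ℂ :=
  fun i => if ∀ x y, PartRel p x y → i x = i y then 1 else 0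

/-- The span of the noncrossing-partition vectors `ξ_p`, `p ∈ NC(k)`. -/
noncomputable def ncSpan (N k : ℕ) : Submodule ℂ ((Fin k → Fin N) → ℂ) :=
  Submodule.span ℂ
    {v | ∃ p : Finpartition (Finset.univ : Finset (Fin k)), cr p = ∅ ∧ v = xi N p}

/-- The span of the crossing-partition vectors `ξ_p`, `p ∈ CR(k)`. -/
noncomputable def crSpan (N k : ℕ) : Submodule ℂ ((Fin k → Fin N) → ℂ) :=
  Submodule.span ℂ
    {v | ∃ p : Finpartition (Finset.univ : Finset (Fin k)), (cr p).Nonempty ∧ v = xi N p}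

/-- The span of all partition vectors `ξ_p`, `p ∈ P(k)`. -/
noncomputable def allSpan (N k : ℕ) : Submodule ℂ ((Fin k → Fin N) → ℂ) :=
  Submodule.span ℂ
    {v | ∃ p : Finpartition (Finset.univ : Finset (Fin k)), v = xi N p}

/-!
Evaluating `ξ_p` at an index tuple `i` gives `[p ≤ ker i]`, where `ker i` is the partition of
`[N+1]` into the fibres of `i`; since `i` takes at most `N` values, the kernels that occur are
exactly the partitions other than the discrete one `⊥`. By triangularity of `≤`, a linear relation
among the `ξ_p` is therefore determined by its coefficient at `⊥`. All partition vectors thus span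
a space of dimension `|P(N+1)| - 1`, the crossing ones are independent (`⊥` is noncrossing), and so
are the noncrossing ones: for `a < b < c < d`, a noncrossing partition below the partition with the
two blocks `{a, c}`, `{b, d}` lies below one of them, and inclusion–exclusion over these three
partitions forces the coefficient at `⊥` to vanish. Counting dimensions,
`dim (NC ∩ CR) = |NC| + |CR| - (|P| - 1) = 1`.
-/

open Finset

theorem eq_zero_of_forall_sum_filter_le_eq_zero {α M : Type*} [Fintype α] [PartialOrder α]
    [DecidableRel (α := α) (· ≤ ·)] [AddCommMonoid M] {c : α → M}
    (h : ∀ q, ∑ p with p ≤ q, c p = 0) : c = 0 := by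
  funext q
  induction q using WellFoundedLT.induction with
  | _ q ih =>
    rw [Pi.zero_apply, ← h q, sum_eq_single_of_mem q (by simp)
      fun p hp hpq => ih p (lt_of_le_of_ne (mem_filter.1 hp).2 hpq)]

theorem finrank_span_image_eq_card {R M ι : Type*} [Ring R] [Nontrivial R] [StrongRankCondition R]
    [AddCommGroup M] [Module R M] {v : ι → M} {s : Set ι} [Fintype s] (hv : LinearIndepOn R v s) :
    Module.finrank R (Submodule.span R (v '' s)) = Fintype.card s := by
  rw [Set.image_eq_range]
  exact finrank_span_eq_card hv

abbrev SetPartition (n : ℕ) := Finpartition (univ : Finset (Fin n))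

section Partitions

variable {n : ℕ} {p q : SetPartition n} {x y : Fin n}

theorem partRel_iff_mem_part : PartRel p x y ↔ y ∈ p.part x := by
  rw [Finpartition.mem_part_iff_exists]
  exact exists_congr fun B => and_congr_right fun _ => and_comm

theorem partRel_iff_part_eq : PartRel p x y ↔ p.part x = p.part y := by
  rw [partRel_iff_mem_part]
  exact (p.mem_part_iff_part_eq_part (mem_univ y) (mem_univ x)).trans eq_comm

theorem PartRel.symm (h : PartRel p x y) : PartRel p y x := by
  obtain ⟨B, hB, hx, hy⟩ := h
  exact ⟨B, hB, hy, hx⟩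

theorem PartRel.of_sym2_eq {a b : Fin n} (h : PartRel p x y) (hxy : s(x, y) = s(a, b)) :
    PartRel p a b := by
  rcases Sym2.eq_iff.1 hxy with ⟨rfl, rfl⟩ | ⟨rfl, rfl⟩
  exacts [h, h.symm]

theorem le_iff_partRel : p ≤ q ↔ ∀ x y, PartRel p x y → PartRel q x y := by
  constructor
  · rintro h x y ⟨B, hB, hx, hy⟩
    obtain ⟨C, hC, hBC⟩ := h hB
    exact ⟨C, hC, hBC hx, hBC hy⟩
  · intro h B hB
    obtain ⟨x, hx⟩ := p.nonempty_of_mem_parts hB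
    exact ⟨q.part x, q.part_mem.2 (mem_univ x),
      fun y hy => partRel_iff_mem_part.1 (h x y ⟨B, hB, hx, hy⟩)⟩

theorem ext_partRel (h : ∀ x y, PartRel p x y ↔ PartRel q x y) : p = q :=
  le_antisymm (le_iff_partRel.2 fun x y => (h x y).1) (le_iff_partRel.2 fun x y => (h x y).2)

theorem partRel_bot : PartRel (⊥ : SetPartition n) x y ↔ x = y := by
  simp [PartRel, Finpartition.parts_bot, eq_comm]

theorem eq_bot_iff_partRel : p = ⊥ ↔ ∀ x y, PartRel p x y → x = y := by
  simp only [← le_bot_iff, le_iff_partRel, partRel_bot]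

theorem card_parts_lt_of_ne_bot (hp : p ≠ ⊥) : #p.parts < n := by
  obtain ⟨x, y, hxy, hne⟩ : ∃ x y, PartRel p x y ∧ x ≠ y := by
    simpa [eq_bot_iff_partRel] using hp
  let f : Fin n → p.parts := fun x => ⟨p.part x, p.part_mem.2 (mem_univ x)⟩
  have hf : Function.Surjective f := by
    rintro ⟨B, hB⟩
    obtain ⟨x, hx⟩ := p.nonempty_of_mem_parts hB
    exact ⟨x, Subtype.ext (p.part_eq_of_mem hB hx)⟩
  have hf' : ¬ Function.Injective f := fun hinj =>
    hne (hinj (Subtype.ext (partRel_iff_part_eq.1 hxy)))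
  simpa using Fintype.card_lt_of_surjective_not_injective f hf hf'

noncomputable def kerPart {α : Type*} (i : Fin n → α) : SetPartition n :=
  Finpartition.ofSetoid (Setoid.ker i)

variable {α : Type*} {i : Fin n → α}

theorem partRel_kerPart : PartRel (kerPart i) x y ↔ i x = i y := by
  rw [partRel_iff_mem_part]
  exact Finpartition.mem_part_ofSetoid_iff_rel

theorem le_kerPart_iff : p ≤ kerPart i ↔ ∀ x y, PartRel p x y → i x = i y := by
  simp only [le_iff_partRel, partRel_kerPart]

theorem kerPart_ne_bot [Fintype α] (h : Fintype.card α < n) : kerPart i ≠ ⊥ := by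
  obtain ⟨x, y, hne, hxy⟩ := Fintype.exists_ne_map_eq_of_card_lt i (by simpa using h)
  rw [Ne, eq_bot_iff_partRel]
  exact fun hbot => hne (hbot x y (partRel_kerPart.2 hxy))

theorem exists_kerPart_eq [Fintype α] (hq : #q.parts ≤ Fintype.card α) :
    ∃ i : Fin n → α, kerPart i = q := by
  obtain ⟨f⟩ := Function.Embedding.nonempty_of_card_le (by simpa using hq :
    Fintype.card q.parts ≤ Fintype.card α)
  refine ⟨fun x => f ⟨q.part x, q.part_mem.2 (mem_univ x)⟩, ext_partRel fun x y => ?_⟩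
  rw [partRel_kerPart, partRel_iff_part_eq, f.injective.eq_iff, Subtype.mk.injEq]

theorem xi_apply (N : ℕ) (p : SetPartition n) (i : Fin n → Fin N) :
    xi N p i = if p ≤ kerPart i then 1 else 0 := by
  simp only [xi, le_kerPart_iff]

end Partitions

section Independence

variable {N : ℕ}

theorem sum_filter_le_eq_zero_of_sum_smul_xi_eq_zero {n : ℕ} {c : SetPartition n → ℂ}
    (h : ∑ p, c p • xi N p = 0) {q : SetPartition n} (hq : #q.parts ≤ N) :
    ∑ p with p ≤ q, c p = 0 := by
  obtain ⟨i, rfl⟩ := exists_kerPart_eq (α := Fin N) (by simpa using hq)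
  simpa [Finset.sum_apply, xi_apply, Finset.sum_filter] using congrFun h i

theorem linearIndepOn_xi {S : Set (SetPartition (N + 1))}
    (hS : ∀ c : SetPartition (N + 1) → ℂ, (∀ p ∉ S, c p = 0) →
      (∀ q ≠ ⊥, ∑ p with p ≤ q, c p = 0) → c ⊥ = 0) :
    LinearIndepOn ℂ (xi N) S := by
  rw [← S.coe_toFinset, linearIndepOn_finset_iff]
  intro f hf p hp
  set c : SetPartition (N + 1) → ℂ := fun p => if p ∈ S then f p else 0 with hc
  have hsupp : ∀ p ∉ S, c p = 0 := fun p hp => if_neg hp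
  have hrel : ∑ p, c p • xi N p = 0 := by
    rw [← hf]
    simp only [hc, ite_smul, zero_smul, ← Finset.sum_filter]
    congr 1
    ext
    simp
  have hlower : ∀ q ≠ ⊥, ∑ p with p ≤ q, c p = 0 := fun q hq =>
    sum_filter_le_eq_zero_of_sum_smul_xi_eq_zero hrel
      (Nat.lt_succ_iff.1 (card_parts_lt_of_ne_bot hq))
  have hall : ∀ q, ∑ p with p ≤ q, c p = 0 := by
    intro q
    rcases eq_or_ne q ⊥ with rfl | hq
    · simpa [Finset.filter_eq'] using hS c hsupp hlower
    · exact hlower q hq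
  simpa [hc, Set.mem_toFinset.1 hp] using
    congrFun (eq_zero_of_forall_sum_filter_le_eq_zero hall) p

theorem linearIndepOn_xi_ne_bot : LinearIndepOn ℂ (xi N) {p : SetPartition (N + 1) | p ≠ ⊥} :=
  linearIndepOn_xi fun c hsupp _ => hsupp ⊥ (by simp)

end Independence

section Noncrossing

variable {n : ℕ} {a b c d x y : Fin n} {p : SetPartition n}

theorem cr_bot : cr (⊥ : SetPartition n) = ∅ :=
  Set.eq_empty_of_forall_notMem fun _ ⟨_, _, _, _, hab, hbc, _, _, hac, _, _⟩ =>
    (hab.trans hbc).ne (partRel_bot.1 hac)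

noncomputable def pairPart (a c : Fin n) : SetPartition n :=
  kerPart (Function.update id c a)

noncomputable def twoPairPart (a c b d : Fin n) : SetPartition n :=
  kerPart (Function.update (Function.update id c a) d b)

theorem partRel_pairPart (hac : a ≠ c) :
    PartRel (pairPart a c) x y ↔ x = y ∨ s(x, y) = s(a, c) := by
  simp only [pairPart, partRel_kerPart, Function.update_apply, id, Sym2.eq_iff]
  grind

theorem partRel_twoPairPart (hab : a ≠ b) (hac : a ≠ c) (had : a ≠ d) (hbc : b ≠ c)
    (hbd : b ≠ d) (hcd : c ≠ d) :
    PartRel (twoPairPart a c b d) x y ↔ x = y ∨ s(x, y) = s(a, c) ∨ s(x, y) = s(b, d) := by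
  simp only [twoPairPart, partRel_kerPart, Function.update_apply, id, Sym2.eq_iff]
  grind

theorem pairPart_ne_bot (hac : a ≠ c) : pairPart a c ≠ ⊥ := by
  rw [Ne, eq_bot_iff_partRel]
  exact fun h => hac (h a c ((partRel_pairPart hac).2 (Or.inr rfl)))

theorem pairPart_inf_pairPart (hab : a ≠ b) (had : a ≠ d) (hac : a ≠ c) (hbd : b ≠ d) :
    pairPart a c ⊓ pairPart b d = ⊥ := by
  refine eq_bot_iff_partRel.2 fun x y hxy => ?_
  have hac' := (partRel_pairPart hac).1 (le_iff_partRel.1 inf_le_left x y hxy)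
  have hbd' := (partRel_pairPart hbd).1 (le_iff_partRel.1 inf_le_right x y hxy)
  rcases hac' with h | h
  · exact h
  rcases hbd' with h' | h'
  · exact h'
  have := Sym2.mem_mk_left a c
  rw [← h, h', Sym2.mem_iff] at this
  tauto

theorem pairPart_le_twoPairPart_left (hab : a ≠ b) (hac : a ≠ c) (had : a ≠ d) (hbc : b ≠ c)
    (hbd : b ≠ d) (hcd : c ≠ d) : pairPart a c ≤ twoPairPart a c b d :=
  le_iff_partRel.2 fun x y h => by
    rw [partRel_twoPairPart hab hac had hbc hbd hcd]
    rw [partRel_pairPart hac] at h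
    tauto

theorem pairPart_le_twoPairPart_right (hab : a ≠ b) (hac : a ≠ c) (had : a ≠ d) (hbc : b ≠ c)
    (hbd : b ≠ d) (hcd : c ≠ d) : pairPart b d ≤ twoPairPart a c b d :=
  le_iff_partRel.2 fun x y h => by
    rw [partRel_twoPairPart hab hac had hbc hbd hcd]
    rw [partRel_pairPart hbd] at h
    tauto

theorem le_pairPart_or_le_pairPart_of_cr_eq_empty (hab : a < b) (hbc : b < c) (hcd : c < d)
    (hp : cr p = ∅) (hle : p ≤ twoPairPart a c b d) : p ≤ pairPart a c ∨ p ≤ pairPart b d := by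
  have hQ : ∀ x y, PartRel p x y → x = y ∨ s(x, y) = s(a, c) ∨ s(x, y) = s(b, d) :=
    fun x y h => (partRel_twoPairPart hab.ne (hab.trans hbc).ne (hab.trans (hbc.trans hcd)).ne
      hbc.ne (hbc.trans hcd).ne hcd.ne).1 (le_iff_partRel.1 hle x y h)
  by_contra! h
  simp only [le_iff_partRel, partRel_pairPart (hab.trans hbc).ne,
    partRel_pairPart (hbc.trans hcd).ne, not_forall] at h
  obtain ⟨⟨x, y, hxy, hxy'⟩, ⟨u, v, huv, huv'⟩⟩ := h
  have hbd : PartRel p b d := hxy.of_sym2_eq (by have := hQ x y hxy; tauto)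
  have hac : PartRel p a c := huv.of_sym2_eq (by have := hQ u v huv; tauto)
  have hnab : ¬ PartRel p a b := fun h => by
    have := hQ a b h
    simp only [Sym2.eq_iff] at this
    grind
  exact Set.eq_empty_iff_forall_notMem.1 hp _ ⟨a, b, c, d, hab, hbc, hcd, rfl, hac, hbd, hnab⟩

theorem coeff_bot_eq_zero_of_cr_eq_empty (hab : a < b) (hbc : b < c) (hcd : c < d)
    {w : SetPartition n → ℂ} (hw : ∀ p, cr p ≠ ∅ → w p = 0)
    (hlower : ∀ q ≠ ⊥, ∑ p with p ≤ q, w p = 0) : w ⊥ = 0 := by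
  have hac : a ≠ c := (hab.trans hbc).ne
  have hbd : b ≠ d := (hbc.trans hcd).ne
  have had : a ≠ d := (hab.trans (hbc.trans hcd)).ne
  have hleft := pairPart_le_twoPairPart_left hab.ne hac had hbc.ne hbd hcd.ne
  have hright := pairPart_le_twoPairPart_right hab.ne hac had hbc.ne hbd hcd.ne
  set A : Finset (SetPartition n) := {p | p ≤ pairPart a c}
  set B : Finset (SetPartition n) := {p | p ≤ pairPart b d}
  have hunion : ∑ p with p ≤ twoPairPart a c b d, w p = ∑ p ∈ A ∪ B, w p := by
    refine (sum_subset (fun p hp => ?_) fun p hpQ hpAB => hw p fun hp => hpAB ?_).symm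
    · rcases mem_union.1 hp with hp | hp <;> simp only [A, B, mem_filter] at hp ⊢
      exacts [⟨mem_univ p, hp.2.trans hleft⟩, ⟨mem_univ p, hp.2.trans hright⟩]
    · simpa [A, B] using le_pairPart_or_le_pairPart_of_cr_eq_empty hab hbc hcd hp
        (mem_filter.1 hpQ).2
  have hinter : A ∩ B = {⊥} := by
    ext p
    simp [A, B, ← le_inf_iff, pairPart_inf_pairPart hab.ne had hac hbd]
  have hsum := sum_union_inter (s₁ := A) (s₂ := B) (f := w)
  rw [← hunion, hinter, sum_singleton, hlower _ (ne_bot_of_le_ne_bot (pairPart_ne_bot hac) hleft),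
    hlower _ (pairPart_ne_bot hac), hlower _ (pairPart_ne_bot hbd)] at hsum
  simpa using hsum

end Noncrossing

section Dimensions

variable {N : ℕ}

theorem linearIndepOn_xi_cr_eq_empty (hN : 3 ≤ N) :
    LinearIndepOn ℂ (xi N) {p : SetPartition (N + 1) | cr p = ∅} :=
  linearIndepOn_xi fun _ hw hlower =>
    coeff_bot_eq_zero_of_cr_eq_empty (a := ⟨0, by omega⟩) (b := ⟨1, by omega⟩)
      (c := ⟨2, by omega⟩) (d := ⟨3, by omega⟩) (by simp [Fin.lt_def]) (by simp [Fin.lt_def])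
      (by simp [Fin.lt_def]) hw hlower

theorem linearIndepOn_xi_cr_nonempty :
    LinearIndepOn ℂ (xi N) {p : SetPartition (N + 1) | (cr p).Nonempty} :=
  linearIndepOn_xi_ne_bot.mono fun _ hp hbot => by simp [hbot, cr_bot] at hp

noncomputable def kerIndicator (N : ℕ) {n : ℕ} (q : SetPartition n) : (Fin n → Fin N) → ℂ :=
  fun i => if kerPart i = q then 1 else 0

theorem xi_eq_sum_kerIndicator {n : ℕ} (p : SetPartition n) :
    xi N p = ∑ q with p ≤ q, kerIndicator N q := by
  funext i
  simp [Finset.sum_apply, kerIndicator, xi_apply]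

theorem kerIndicator_bot : kerIndicator N (⊥ : SetPartition (N + 1)) = 0 :=
  funext fun _ => if_neg (kerPart_ne_bot (by simp))

theorem finrank_allSpan :
    Module.finrank ℂ (allSpan N (N + 1)) = Fintype.card (SetPartition (N + 1)) - 1 := by
  have hcard : Fintype.card {p : SetPartition (N + 1) // p ≠ ⊥} =
      Fintype.card (SetPartition (N + 1)) - 1 :=
    (Fintype.card_subtype_compl _).trans (by rw [Fintype.card_subtype_eq])
  rw [← hcard]
  refine le_antisymm ?_ ?_
  · have hle : allSpan N (N + 1) ≤ Submodule.span ℂ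
        (Set.range fun q : {q : SetPartition (N + 1) // q ≠ ⊥} => kerIndicator N q.1) := by
      refine Submodule.span_le.2 ?_
      rintro _ ⟨p, rfl⟩
      rw [xi_eq_sum_kerIndicator]
      refine Submodule.sum_mem _ fun q _ => ?_
      rcases eq_or_ne q ⊥ with rfl | hq
      · simp [kerIndicator_bot]
      · exact Submodule.subset_span ⟨⟨q, hq⟩, rfl⟩
    exact (Submodule.finrank_mono hle).trans (finrank_range_le_card _)
  · refine (finrank_span_image_eq_card linearIndepOn_xi_ne_bot).symm.trans_le ?_
    refine Submodule.finrank_mono (Submodule.span_mono ?_)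
    rintro _ ⟨p, -, rfl⟩
    exact ⟨p, rfl⟩

theorem ncSpan_eq_span_image (k : ℕ) :
    ncSpan N k = Submodule.span ℂ (xi N '' {p | cr p = ∅}) := by
  simp only [ncSpan, Set.image, eq_comm]
  rfl

theorem crSpan_eq_span_image (k : ℕ) :
    crSpan N k = Submodule.span ℂ (xi N '' {p | (cr p).Nonempty}) := by
  simp only [crSpan, Set.image, eq_comm]
  rfl

theorem ncSpan_sup_crSpan (k : ℕ) : ncSpan N k ⊔ crSpan N k = allSpan N k := by
  have hcover : {p : SetPartition k | cr p = ∅} ∪ {p | (cr p).Nonempty} = Set.univ := by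
    ext p
    simp [Set.nonempty_iff_ne_empty, em]
  rw [ncSpan_eq_span_image, crSpan_eq_span_image, ← Submodule.span_union, ← Set.image_union,
    hcover, Set.image_univ, allSpan]
  simp only [Set.range, eq_comm]

theorem finrank_ncSpan (hN : 3 ≤ N) :
    Module.finrank ℂ (ncSpan N (N + 1)) = Fintype.card {p : SetPartition (N + 1) | cr p = ∅} := by
  rw [ncSpan_eq_span_image]
  exact finrank_span_image_eq_card (linearIndepOn_xi_cr_eq_empty hN)

theorem finrank_crSpan :
    Module.finrank ℂ (crSpan N (N + 1)) =
      Fintype.card {p : SetPartition (N + 1) | (cr p).Nonempty} := by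
  rw [crSpan_eq_span_image]
  exact finrank_span_image_eq_card linearIndepOn_xi_cr_nonempty

theorem card_cr_eq_empty_add_card_cr_nonempty (k : ℕ) :
    Fintype.card {p : SetPartition k | cr p = ∅} +
      Fintype.card {p : SetPartition k | (cr p).Nonempty} = Fintype.card (SetPartition k) := by
  show Fintype.card {p // cr p = ∅} + Fintype.card {p // (cr p).Nonempty} = _
  rw [Fintype.card_congr (Equiv.subtypeEquivRight fun _ => Set.nonempty_iff_ne_empty),
    Fintype.card_subtype_compl]
  exact Nat.add_sub_of_le (Fintype.card_subtype_le _)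

end Dimensions

/-- for `N ≥ 3`, inside `((Fin (N+1) → Fin N) → ℂ)`, the intersection
of the noncrossing span and the crossing span is one-dimensional. -/
theorem stmt6 (N : ℕ) (hN : 3 ≤ N) :
    Module.finrank ℂ ↥(ncSpan N (N + 1) ⊓ crSpan N (N + 1)) = 1 := by
  have hdim := Submodule.finrank_sup_add_finrank_inf_eq (ncSpan N (N + 1)) (crSpan N (N + 1))
  rw [ncSpan_sup_crSpan, finrank_allSpan, finrank_ncSpan hN, finrank_crSpan] at hdim
  have hcard := card_cr_eq_empty_add_card_cr_nonempty (N + 1)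
  have hpos : 0 < Fintype.card (SetPartition (N + 1)) := Fintype.card_pos
  omega
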